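/- Let g ≥ 1. Every element of G_g can be written in a unique way in the form σ^p a_1^{m_1} ⋯ a_g^{m_g} b_1^{n_1} ⋯ b_g^{n_g}; that is, the map ℤ × ℤ^g × ℤ^g → G_g given by (p, (m_i), (n_i)) ↦ σ^p ∏_{i=1}^g a_i^{m_i} ∏_{i=1}^g b_i^{n_i} is a bijection. -/

import Mathlib

/-- Generators of the group `G_g`: `a i`, `b i` for `i : Fin g`, and `s` (= σ). -/
inductive GGGen (g : ℕ) : Type
  | a : Fin g → GGGen g
  | b : Fin g → GGGen g
  | s : GGGen g

/-- Relators of `G_g`: the generators commute pairwise except the pairs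
`(a_i, b_i)`, and `[a_i, b_i] = σ²`. -/
def GgRels (g : ℕ) : Set (FreeGroup (GGGen g)) :=
  {r | ∃ x y : GGGen g, (∀ i : Fin g, ¬((x = .a i ∧ y = .b i) ∨ (x = .b i ∧ y = .a i))) ∧
      r = .of x * .of y * (.of x)⁻¹ * (.of y)⁻¹} ∪
  {r | ∃ i : Fin g,
      r = .of (.a i) * .of (.b i) * (.of (.a i))⁻¹ * (.of (.b i))⁻¹ * ((.of .s) ^ 2)⁻¹}

/-- The group `G_g`, as a presented group. -/
abbrev GGroup (g : ℕ) := PresentedGroup (GgRels g)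

/-!
The triples `(p, m, n) ∈ ℤ × ℤ^g × ℤ^g` form a group under
`(p, m, n) * (p', m', n') = (p + p' - 2 n⬝m', m + m', n + n')`: this is the law forced on the words
`σ^p a^m b^n` by the centrality of `σ` and the rule `b^n a^m = σ^(-2 n⬝m) a^m b^n`, which follows
from `[a_i, b_i] = σ²`. The relations of `G_g` hold in this group, which gives a homomorphism from
`G_g` to it, and the same two rules make `(p, m, n) ↦ σ^p a^m b^n` a homomorphism back. The two
are mutually inverse, as one checks on the generators of `G_g` and on the triples respectively.
-/

open scoped commutatorElement

section ZPowProd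

variable {G : Type*} [Group G] {n : ℕ}

def zpowProd (α : Fin n → G) (m : Fin n → ℤ) : G := (List.ofFn fun i => α i ^ m i).prod

lemma zpowProd_succ (α : Fin (n + 1) → G) (m : Fin (n + 1) → ℤ) :
    zpowProd α m = α 0 ^ m 0 * zpowProd (fun i => α i.succ) (fun i => m i.succ) := by
  simp [zpowProd, List.ofFn_succ]

@[simp]
lemma zpowProd_zero (α : Fin n → G) : zpowProd α 0 = 1 := by
  simp [zpowProd]

lemma zpowProd_single (α : Fin n → G) (i : Fin n) (c : ℤ) :
    zpowProd α (Pi.single i c) = α i ^ c := by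
  induction n with
  | zero => exact i.elim0
  | succ n ih =>
    rw [zpowProd_succ]
    cases i using Fin.cases with
    | zero => simp [zpowProd]
    | succ i =>
      have hsucc : (fun j : Fin n => (Pi.single i.succ c : Fin (n + 1) → ℤ) j.succ) =
          Pi.single i c := by
        funext j
        simp [Pi.single_apply]
      simp [hsucc, ih]

lemma zpowProd_add {α : Fin n → G} (hα : ∀ i j, Commute (α i) (α j)) (m m' : Fin n → ℤ) :
    zpowProd α (m + m') = zpowProd α m * zpowProd α m' := by
  induction n with
  | zero => simp [zpowProd]
  | succ n ih =>
    have hc : Commute (α 0 ^ m' 0) (zpowProd (fun i => α i.succ) (fun i => m i.succ)) :=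
      Commute.list_prod_right _ _ (by simp [((hα _ _).zpow_zpow _ _)])
    rw [zpowProd_succ, zpowProd_succ α m, zpowProd_succ α m']
    simp only [Pi.add_apply, zpow_add]
    rw [← Pi.add_def, ih (fun i j => hα _ _), mul_assoc, mul_assoc, hc.left_comm]

lemma map_zpowProd {H : Type*} [Group H] (f : G →* H) (α : Fin n → G) (m : Fin n → ℤ) :
    f (zpowProd α m) = zpowProd (f ∘ α) m := by
  simp [zpowProd, map_list_prod, List.map_ofFn, Function.comp_def]

lemma zpowProd_ofAdd_single (f : Multiplicative (Fin n → ℤ) →* G) (m : Fin n → ℤ) :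
    zpowProd (fun i => f (.ofAdd (Pi.single i 1))) m = f (.ofAdd m) := by
  rw [← Function.comp_def f, ← map_zpowProd, zpowProd, List.prod_ofFn]
  congr 1
  apply Multiplicative.toAdd.injective
  simp [toAdd_prod, ← Pi.single_smul, Finset.univ_sum_single]

lemma zpow_mul_eq_of_mul_eq {u x c : G} (hcu : Commute c u) (h : u * x = c * (x * u)) (k : ℤ) :
    u ^ k * x = c ^ k * (x * u ^ k) := by
  have hsemi : SemiconjBy x u (c⁻¹ * u) := by
    rw [SemiconjBy, mul_assoc, h]
    group
  rw [(hsemi.zpow_right k).eq, hcu.inv_left.mul_zpow]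
  group

lemma zpowProd_mul_of_mul_eq {α : Fin n → G} {x c : G} {k : Fin n → ℤ}
    (hcα : ∀ i, Commute c (α i)) (h : ∀ i, α i * x = c ^ k i * (x * α i)) (m : Fin n → ℤ) :
    zpowProd α m * x = c ^ (m ⬝ᵥ k) * (x * zpowProd α m) := by
  induction n with
  | zero => simp [zpowProd]
  | succ n ih =>
    have h0 := zpow_mul_eq_of_mul_eq ((hcα 0).zpow_left (k 0)) (h 0) (m 0)
    have hdot : m ⬝ᵥ k =
        (fun i : Fin n => m i.succ) ⬝ᵥ (fun i : Fin n => k i.succ) + m 0 * k 0 :=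
      (Fin.sum_univ_succ _).trans (add_comm _ _)
    rw [zpowProd_succ, mul_assoc, ih (fun i => hcα _) (fun i => h _),
      ((hcα 0).zpow_zpow _ _).symm.left_comm, ← mul_assoc (α 0 ^ m 0), h0, hdot,
      zpow_add, ← zpow_mul, mul_comm (k 0)]
    simp only [mul_assoc]

end ZPowProd

@[ext]
structure NormalForm (g : ℕ) where
  p : ℤ
  m : Fin g → ℤ
  n : Fin g → ℤ

namespace NormalForm

variable {g : ℕ}

instance : Mul (NormalForm g) := ⟨fun x y => ⟨x.p + y.p - 2 * (x.n ⬝ᵥ y.m), x.m + y.m, x.n + y.n⟩⟩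
instance : One (NormalForm g) := ⟨⟨0, 0, 0⟩⟩
instance : Inv (NormalForm g) := ⟨fun x => ⟨-x.p - 2 * (x.n ⬝ᵥ x.m), -x.m, -x.n⟩⟩

lemma mul_def (x y : NormalForm g) :
    x * y = ⟨x.p + y.p - 2 * (x.n ⬝ᵥ y.m), x.m + y.m, x.n + y.n⟩ := rfl
lemma one_def : (1 : NormalForm g) = ⟨0, 0, 0⟩ := rfl
lemma inv_def (x : NormalForm g) : x⁻¹ = ⟨-x.p - 2 * (x.n ⬝ᵥ x.m), -x.m, -x.n⟩ := rfl

instance : Group (NormalForm g) where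
  mul_assoc x y z := by ext <;> simp [mul_def, add_dotProduct, dotProduct_add] <;> ring
  one_mul x := by ext <;> simp [mul_def, one_def]
  mul_one x := by ext <;> simp [mul_def, one_def]
  inv_mul_cancel x := by ext <;> simp [mul_def, one_def, inv_def]; ring

lemma commutatorElement_eq (x y : NormalForm g) :
    ⁅x, y⁆ = ⟨2 * (y.n ⬝ᵥ x.m - x.n ⬝ᵥ y.m), 0, 0⟩ := by
  ext <;> simp [commutatorElement_def, mul_def, inv_def, add_dotProduct]; ring

def sigmaHom : Multiplicative ℤ →* NormalForm g where
  toFun p := ⟨p.toAdd, 0, 0⟩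
  map_one' := rfl
  map_mul' x y := by ext <;> simp [mul_def]

def aHom : Multiplicative (Fin g → ℤ) →* NormalForm g where
  toFun m := ⟨0, m.toAdd, 0⟩
  map_one' := rfl
  map_mul' x y := by ext <;> simp [mul_def]

def bHom : Multiplicative (Fin g → ℤ) →* NormalForm g where
  toFun n := ⟨0, 0, n.toAdd⟩
  map_one' := rfl
  map_mul' x y := by ext <;> simp [mul_def]

@[simp] lemma sigmaHom_ofAdd (p : ℤ) : sigmaHom (.ofAdd p) = (⟨p, 0, 0⟩ : NormalForm g) := rfl
@[simp] lemma aHom_ofAdd (m : Fin g → ℤ) : aHom (.ofAdd m) = (⟨0, m, 0⟩ : NormalForm g) := rfl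
@[simp] lemma bHom_ofAdd (n : Fin g → ℤ) : bHom (.ofAdd n) = (⟨0, 0, n⟩ : NormalForm g) := rfl

lemma sigmaHom_mul_aHom_mul_bHom (p : ℤ) (m n : Fin g → ℤ) :
    sigmaHom (.ofAdd p) * aHom (.ofAdd m) * bHom (.ofAdd n) = ⟨p, m, n⟩ := by
  ext <;> simp [mul_def]

def equivProd (g : ℕ) : NormalForm g ≃ ℤ × (Fin g → ℤ) × (Fin g → ℤ) where
  toFun x := (x.p, x.m, x.n)
  invFun x := ⟨x.1, x.2.1, x.2.2⟩

end NormalForm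

namespace GGroup

variable {g : ℕ}

def σ : GGroup g := PresentedGroup.of .s
def a (i : Fin g) : GGroup g := PresentedGroup.of (.a i)
def b (i : Fin g) : GGroup g := PresentedGroup.of (.b i)

lemma commute_of_of {x y : GGGen g}
    (h : ∀ i : Fin g, ¬((x = .a i ∧ y = .b i) ∨ (x = .b i ∧ y = .a i))) :
    Commute (PresentedGroup.of x : GGroup g) (PresentedGroup.of y) := by
  rw [← commutatorElement_eq_one_iff_commute, commutatorElement_def]
  exact PresentedGroup.one_of_mem (Or.inl ⟨x, y, h, rfl⟩)

lemma a_mul_b (i : Fin g) : a i * b i = σ ^ 2 * (b i * a i) := by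
  have h : a i * b i * (a i)⁻¹ * (b i)⁻¹ * ((σ : GGroup g) ^ 2)⁻¹ = 1 :=
    PresentedGroup.one_of_mem (Or.inr ⟨i, rfl⟩)
  rw [mul_inv_eq_one] at h
  rw [← h]
  group

lemma commute_a_a (i j : Fin g) : Commute (a i) (a j) := commute_of_of (by simp)
lemma commute_b_b (i j : Fin g) : Commute (b i) (b j) := commute_of_of (by simp)
lemma commute_a_b {i j : Fin g} (hij : i ≠ j) : Commute (a i) (b j) :=
  commute_of_of (by simpa using hij.symm)

lemma commute_σ (x : GGroup g) : Commute σ x := by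
  suffices x ∈ Subgroup.centralizer {σ} from (Subgroup.mem_centralizer_singleton_iff.mp this).symm
  refine PresentedGroup.generated_by _ _ (fun y => ?_) x
  exact Subgroup.mem_centralizer_singleton_iff.mpr (commute_of_of (by simp)).eq

lemma commute_σ_zpow (k : ℤ) (x : GGroup g) : Commute (σ ^ k) x := (commute_σ x).zpow_left k

lemma zpowProd_a_mul_b (m : Fin g → ℤ) (i : Fin g) :
    zpowProd a m * b i = σ ^ (2 * m i) * (b i * zpowProd a m) := by
  have hrel (j : Fin g) : a j * b i = σ ^ (Pi.single i 2 : Fin g → ℤ) j * (b i * a j) := by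
    rcases eq_or_ne j i with rfl | hji
    · simpa using a_mul_b j
    · simpa [hji] using (commute_a_b hji).eq
  rw [zpowProd_mul_of_mul_eq (fun j => commute_σ _) hrel, dotProduct_single, mul_comm]

lemma b_mul_zpowProd_a (i : Fin g) (m : Fin g → ℤ) :
    b i * zpowProd a m = σ ^ (-(2 * m i)) * (zpowProd a m * b i) := by
  rw [zpowProd_a_mul_b, ← mul_assoc, ← zpow_add, neg_add_cancel, zpow_zero, one_mul]

lemma zpowProd_b_mul_zpowProd_a (n m : Fin g → ℤ) :
    zpowProd b n * zpowProd a m = σ ^ (-(2 * (n ⬝ᵥ m))) * (zpowProd a m * zpowProd b n) := by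
  rw [zpowProd_mul_of_mul_eq (fun i => commute_σ _) (fun i => b_mul_zpowProd_a i m)]
  simp [dotProduct, Finset.mul_sum, mul_left_comm]

def genToNormalForm : GGGen g → NormalForm g
  | .a i => NormalForm.aHom (.ofAdd (Pi.single i 1))
  | .b i => NormalForm.bHom (.ofAdd (Pi.single i 1))
  | .s => NormalForm.sigmaHom (.ofAdd 1)

lemma lift_genToNormalForm_eq_one : ∀ r ∈ GgRels g, FreeGroup.lift genToNormalForm r = 1 := by
  rintro r (⟨x, y, hxy, rfl⟩ | ⟨i, rfl⟩)
  · rw [← commutatorElement_def, map_commutatorElement, FreeGroup.lift_apply_of,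
      FreeGroup.lift_apply_of, NormalForm.commutatorElement_eq]
    rcases x with i | i | _ <;> rcases y with j | j | _ <;>
      simp_all [genToNormalForm, NormalForm.one_def]
  · rw [← commutatorElement_def, map_mul, map_inv, map_commutatorElement, mul_inv_eq_one, map_pow]
    simp [NormalForm.commutatorElement_eq, genToNormalForm, pow_two, NormalForm.mul_def]

def toNormalForm : GGroup g →* NormalForm g := PresentedGroup.toGroup lift_genToNormalForm_eq_one

@[simp]
lemma toNormalForm_of (x : GGGen g) : toNormalForm (PresentedGroup.of x) = genToNormalForm x :=
  PresentedGroup.toGroup.of _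

def ofNormalForm : NormalForm g →* GGroup g where
  toFun x := σ ^ x.p * zpowProd a x.m * zpowProd b x.n
  map_one' := by simp [NormalForm.one_def]
  map_mul' x y := by
    simp only [NormalForm.mul_def, zpowProd_add commute_a_a, zpowProd_add commute_b_b, mul_assoc]
    rw [(commute_σ_zpow y.p (zpowProd b x.n)).symm.left_comm,
      (commute_σ_zpow y.p (zpowProd a x.m)).symm.left_comm,
      ← mul_assoc (zpowProd b x.n), zpowProd_b_mul_zpowProd_a, mul_assoc,
      (commute_σ_zpow _ (zpowProd a x.m)).symm.left_comm, sub_eq_add_neg, zpow_add, zpow_add]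
    simp only [mul_assoc]

lemma ofNormalForm_comp_toNormalForm :
    ofNormalForm.comp toNormalForm = MonoidHom.id (GGroup g) := by
  refine PresentedGroup.ext fun x => ?_
  rcases x with i | i | _ <;> simp [genToNormalForm, ofNormalForm, zpowProd_single, a, b, σ]

lemma toNormalForm_comp_ofNormalForm :
    toNormalForm.comp ofNormalForm = MonoidHom.id (NormalForm g) := by
  ext1 ⟨p, m, n⟩
  have hσ : toNormalForm (σ ^ p : GGroup g) = NormalForm.sigmaHom (.ofAdd p) := by
    rw [map_zpow, σ, toNormalForm_of, genToNormalForm, ← map_zpow, ← ofAdd_zsmul, smul_eq_mul,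
      mul_one]
  have ha : toNormalForm ∘ a = fun i : Fin g => NormalForm.aHom (.ofAdd (Pi.single i 1)) :=
    funext fun _ => toNormalForm_of _
  have hb : toNormalForm ∘ b = fun i : Fin g => NormalForm.bHom (.ofAdd (Pi.single i 1)) :=
    funext fun _ => toNormalForm_of _
  simp only [ofNormalForm, MonoidHom.comp_apply, MonoidHom.coe_mk, OneHom.coe_mk, map_mul,
    map_zpowProd, hσ, ha, hb, zpowProd_ofAdd_single]
  exact NormalForm.sigmaHom_mul_aHom_mul_bHom p m n

def equivNormalForm : GGroup g ≃* NormalForm g :=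
  toNormalForm.toMulEquiv ofNormalForm ofNormalForm_comp_toNormalForm toNormalForm_comp_ofNormalForm

end GGroup

theorem stmt9_general (g : ℕ) :
    Function.Bijective (fun x : ℤ × (Fin g → ℤ) × (Fin g → ℤ) =>
      ((PresentedGroup.of .s : GGroup g) ^ x.1 *
        (List.ofFn fun i : Fin g => (PresentedGroup.of (.a i) : GGroup g) ^ x.2.1 i).prod *
        (List.ofFn fun i : Fin g => (PresentedGroup.of (.b i) : GGroup g) ^ x.2.2 i).prod)) := by
  show Function.Bijective (GGroup.ofNormalForm ∘ (NormalForm.equivProd g).symm)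
  exact GGroup.equivNormalForm.symm.bijective.comp (NormalForm.equivProd g).symm.bijective

/-- Unique normal form `σ^p a_1^{m_1} ⋯ a_g^{m_g} b_1^{n_1} ⋯ b_g^{n_g}`
for elements of `G_g`. -/
theorem stmt9 (g : ℕ) (hg : 1 ≤ g) :
    Function.Bijective (fun x : ℤ × (Fin g → ℤ) × (Fin g → ℤ) =>
      ((PresentedGroup.of .s : GGroup g) ^ x.1 *
        (List.ofFn fun i : Fin g => (PresentedGroup.of (.a i) : GGroup g) ^ x.2.1 i).prod *
        (List.ofFn fun i : Fin g => (PresentedGroup.of (.b i) : GGroup g) ^ x.2.2 i).prod)) :=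
  stmt9_general g
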